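/- arXiv:2309.00128 — 2 statements merged into one kernel-verified Lean document; each statement's English description precedes it below -/
import Mathlib

section
/- Let n ≥ 1 be an integer and 0 < ε < π/2. The function G(ψ) = cot(ψ/2)ⁿ + tan(ψ/2)ⁿ satisfies −G'(ε) = σₙ⁻(ε)·G(ε) and G'(π − ε) = σₙ⁻(ε)·G(π − ε), where σₙ⁻(ε) = n·(1 − tan(ε/2)^{2n})/(sin(ε)·(1 + tan(ε/2)^{2n})) and G' denotes the derivative of G. -/
/-!
Both `cot (ψ / 2)` and `tan (ψ / 2)` have logarithmic derivative `∓ 1 / sin ψ`, so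
`G' = n (tan (ψ / 2) ^ n - cot (ψ / 2) ^ n) / sin ψ`. Writing `a = tan (ε / 2) ^ n`, the boundary
values are `G = a⁻¹ + a` and `∓ G' = n (a⁻¹ - a) / sin ε` at both `ε` and `π - ε`, because
`ψ ↦ π - ψ` swaps `tan (ψ / 2)` with `cot (ψ / 2)` and fixes `sin ψ`; and
`a⁻¹ - a = (1 - a ^ 2) / (1 + a ^ 2) * (a⁻¹ + a)`.
-/

open Real

theorem HasDerivAt.pow_of_eq_mul {𝕜 𝔸 : Type*} [NontriviallyNormedField 𝕜] [NormedCommRing 𝔸]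
    [NormedAlgebra 𝕜 𝔸] {f : 𝕜 → 𝔸} {c : 𝔸} {x : 𝕜} (hf : HasDerivAt f (c * f x) x) (n : ℕ) :
    HasDerivAt (fun y => f y ^ n) (n * c * f x ^ n) x := by
  refine (hf.fun_pow n).congr_deriv ?_
  cases n with
  | zero => simp
  | succ m => push_cast; ring

namespace Real

lemma sin_eq_two_mul_sin_half_mul_cos_half (ψ : ℝ) :
    sin ψ = 2 * sin (ψ / 2) * cos (ψ / 2) := by
  rw [← sin_two_mul, mul_div_cancel₀ ψ two_ne_zero]

lemma sin_half_ne_zero_and_cos_half_ne_zero {ψ : ℝ} (h : sin ψ ≠ 0) :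
    sin (ψ / 2) ≠ 0 ∧ cos (ψ / 2) ≠ 0 := by
  rw [sin_eq_two_mul_sin_half_mul_cos_half] at h
  exact ⟨right_ne_zero_of_mul (left_ne_zero_of_mul h), right_ne_zero_of_mul h⟩

theorem hasDerivAt_cot_half {ψ : ℝ} (h : sin ψ ≠ 0) :
    HasDerivAt (fun y => cot (y / 2)) (-(sin ψ)⁻¹ * cot (ψ / 2)) ψ := by
  obtain ⟨hs, hc⟩ := sin_half_ne_zero_and_cos_half_ne_zero h
  have hhalf := (hasDerivAt_id ψ).div_const 2
  simp only [cot_eq_cos_div_sin]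
  refine (hhalf.cos.div hhalf.sin hs).congr_deriv ?_
  simp only [id]
  rw [sin_eq_two_mul_sin_half_mul_cos_half ψ]
  field_simp
  linear_combination -sin_sq_add_cos_sq (ψ / 2)

theorem hasDerivAt_tan_half {ψ : ℝ} (h : sin ψ ≠ 0) :
    HasDerivAt (fun y => tan (y / 2)) ((sin ψ)⁻¹ * tan (ψ / 2)) ψ := by
  obtain ⟨hs, hc⟩ := sin_half_ne_zero_and_cos_half_ne_zero h
  refine ((hasDerivAt_tan hc).comp ψ ((hasDerivAt_id ψ).div_const 2)).congr_deriv ?_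
  rw [sin_eq_two_mul_sin_half_mul_cos_half ψ, tan_eq_sin_div_cos]
  field_simp

lemma cot_eq_inv_tan (x : ℝ) : cot x = (tan x)⁻¹ := by
  rw [← cot_inv_eq_tan, inv_inv]

end Real

theorem hasDerivAt_cot_half_pow_add_tan_half_pow (n : ℕ) {ψ : ℝ} (h : sin ψ ≠ 0) :
    HasDerivAt (fun y => cot (y / 2) ^ n + tan (y / 2) ^ n)
      (n * (tan (ψ / 2) ^ n - cot (ψ / 2) ^ n) / sin ψ) ψ := by
  refine (((hasDerivAt_cot_half h).pow_of_eq_mul n).add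
    ((hasDerivAt_tan_half h).pow_of_eq_mul n)).congr_deriv ?_
  ring

lemma mul_inv_sub_div_eq_mul_inv_add (c s : ℝ) {a : ℝ} (ha : a ≠ 0) :
    c * (a⁻¹ - a) / s = c * (1 - a ^ 2) / (s * (1 + a ^ 2)) * (a⁻¹ + a) := by
  rcases eq_or_ne s 0 with rfl | hs
  · simp
  have : 1 + a ^ 2 ≠ 0 := by positivity
  field_simp

theorem eigenfunction_sigma_minus_general (n : ℕ) (ε : ℝ) (hε : 0 < ε)
    (hε' : ε < π / 2) :
    -deriv (fun ψ : ℝ => Real.cot (ψ / 2) ^ n + Real.tan (ψ / 2) ^ n) ε =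
      (n : ℝ) * (1 - Real.tan (ε / 2) ^ (2 * n)) /
          (Real.sin ε * (1 + Real.tan (ε / 2) ^ (2 * n))) *
        (Real.cot (ε / 2) ^ n + Real.tan (ε / 2) ^ n) ∧
    deriv (fun ψ : ℝ => Real.cot (ψ / 2) ^ n + Real.tan (ψ / 2) ^ n) (π - ε) =
      (n : ℝ) * (1 - Real.tan (ε / 2) ^ (2 * n)) /
          (Real.sin ε * (1 + Real.tan (ε / 2) ^ (2 * n))) *
        (Real.cot ((π - ε) / 2) ^ n + Real.tan ((π - ε) / 2) ^ n) := by
  have hsin : sin ε ≠ 0 := (sin_pos_of_pos_of_lt_pi hε (by linarith [pi_pos])).ne'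
  have htan : tan (ε / 2) ^ n ≠ 0 :=
    pow_ne_zero _ (tan_pos_of_pos_of_lt_pi_div_two (by linarith) (by linarith)).ne'
  have hreflect : (π - ε) / 2 = π / 2 - ε / 2 := by ring
  rw [(hasDerivAt_cot_half_pow_add_tan_half_pow n hsin).deriv,
    (hasDerivAt_cot_half_pow_add_tan_half_pow n (by rwa [sin_pi_sub])).deriv, sin_pi_sub,
    hreflect, cot_eq_inv_tan (π / 2 - ε / 2), tan_pi_div_two_sub, inv_inv, cot_eq_inv_tan,
    pow_mul', inv_pow]
  constructor
  · rw [← neg_div, ← mul_neg, neg_sub]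
    exact mul_inv_sub_div_eq_mul_inv_add _ _ htan
  · rw [add_comm (tan (ε / 2) ^ n)]
    exact mul_inv_sub_div_eq_mul_inv_add _ _ htan

/-- For an integer `n ≥ 1` and `0 < ε < π/2`, the function
`G(ψ) = cot(ψ/2)^n + tan(ψ/2)^n` satisfies the Steklov boundary conditions
`-G'(ε) = σₙ⁻(ε) · G(ε)` and `G'(π - ε) = σₙ⁻(ε) · G(π - ε)`, where
`σₙ⁻(ε) = n(1 - tan(ε/2)^(2n)) / (sinε · (1 + tan(ε/2)^(2n)))`. -/
theorem eigenfunction_sigma_minus (n : ℕ) (hn : 1 ≤ n) (ε : ℝ) (hε : 0 < ε)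
    (hε' : ε < π / 2) :
    -deriv (fun ψ : ℝ => Real.cot (ψ / 2) ^ n + Real.tan (ψ / 2) ^ n) ε =
      (n : ℝ) * (1 - Real.tan (ε / 2) ^ (2 * n)) /
          (Real.sin ε * (1 + Real.tan (ε / 2) ^ (2 * n))) *
        (Real.cot (ε / 2) ^ n + Real.tan (ε / 2) ^ n) ∧
    deriv (fun ψ : ℝ => Real.cot (ψ / 2) ^ n + Real.tan (ψ / 2) ^ n) (π - ε) =
      (n : ℝ) * (1 - Real.tan (ε / 2) ^ (2 * n)) /
          (Real.sin ε * (1 + Real.tan (ε / 2) ^ (2 * n))) *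
        (Real.cot ((π - ε) / 2) ^ n + Real.tan ((π - ε) / 2) ^ n) :=
  eigenfunction_sigma_minus_general n ε hε hε'
end

section
/- Let n ≥ 1 be an integer and 0 < ε < π/2. The function G(ψ) = cot(ψ/2)ⁿ − tan(ψ/2)ⁿ satisfies −G'(ε) = σₙ⁺(ε)·G(ε) and G'(π − ε) = σₙ⁺(ε)·G(π − ε), where σₙ⁺(ε) = n·(1 + tan(ε/2)^{2n})/(sin(ε)·(1 − tan(ε/2)^{2n})) and G' denotes the derivative of G. -/
/-!
With `t = tan (ψ/2)` one has `dt/dψ = t / sin ψ`, so `G = t⁻ⁿ - tⁿ` has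
`G'(ψ) = -n (cot (ψ/2)ⁿ + tan (ψ/2)ⁿ) / sin ψ`. On the other hand `σₙ⁺(ε) G(ε)` collapses to
`-G'(ε)` because `cot (ε/2)ⁿ · tan (ε/2)ⁿ = 1`. The reflection `ψ ↦ π - ψ` swaps `tan (ψ/2)` and
`cot (ψ/2)`, so `G` is odd and `G'` even about `π/2`, which turns the condition at `ε` into the
one at `π - ε`.
-/

open Real

lemma Real.cot_half_eq_tan_pi_sub_half (x : ℝ) : cot (x / 2) = tan ((π - x) / 2) := by
  rw [show (π - x) / 2 = π / 2 - x / 2 by ring, tan_pi_div_two_sub, ← cot_inv_eq_tan, inv_inv]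

lemma Real.hasDerivAt_tan_half_s9 {ψ : ℝ} (h : sin ψ ≠ 0) :
    HasDerivAt (fun x => tan (x / 2)) (tan (ψ / 2) / sin ψ) ψ := by
  have hsin : sin ψ = 2 * sin (ψ / 2) * cos (ψ / 2) := by
    rw [← sin_two_mul, mul_div_cancel₀ ψ two_ne_zero]
  obtain ⟨hsin', hcos⟩ : sin (ψ / 2) ≠ 0 ∧ cos (ψ / 2) ≠ 0 := by simpa [hsin] using h
  refine ((hasDerivAt_tan hcos).comp ψ ((hasDerivAt_id ψ).div_const 2)).congr_deriv ?_
  rw [hsin, tan_eq_sin_div_cos]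
  field_simp

lemma Real.hasDerivAt_tan_half_pow (n : ℕ) {ψ : ℝ} (h : sin ψ ≠ 0) :
    HasDerivAt (fun x => tan (x / 2) ^ n) (n * tan (ψ / 2) ^ n / sin ψ) ψ := by
  refine ((hasDerivAt_tan_half_s9 h).fun_pow n).congr_deriv ?_
  rcases eq_or_ne n 0 with rfl | hn
  · simp
  · rw [mul_assoc, mul_div_assoc', pow_sub_one_mul hn, mul_div_assoc]

lemma Real.hasDerivAt_cot_half_pow_sub_tan_half_pow (n : ℕ) {ψ : ℝ} (h : sin ψ ≠ 0) :
    HasDerivAt (fun x => cot (x / 2) ^ n - tan (x / 2) ^ n)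
      (-(n * (cot (ψ / 2) ^ n + tan (ψ / 2) ^ n) / sin ψ)) ψ := by
  have hrefl : HasDerivAt (fun x => tan ((π - x) / 2) ^ n)
      (-(n * cot (ψ / 2) ^ n / sin ψ)) ψ := by
    have := (hasDerivAt_tan_half_pow n (ψ := π - ψ) (by rwa [sin_pi_sub])).comp ψ
      ((hasDerivAt_id ψ).const_sub π)
    simpa [Function.comp_def, sin_pi_sub, ← cot_half_eq_tan_pi_sub_half] using this
  simp only [cot_half_eq_tan_pi_sub_half] at hrefl ⊢
  exact (hrefl.sub (hasDerivAt_tan_half_pow n h)).congr_deriv (by ring)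

lemma add_eq_div_mul_sub_of_mul_eq_one {K : Type*} [Field K] {x y : K} (hxy : x * y = 1)
    (hy : y ^ 2 ≠ 1) : x + y = (1 + y ^ 2) / (1 - y ^ 2) * (x - y) := by
  have hy' : 1 - y ^ 2 ≠ 0 := sub_ne_zero.mpr (Ne.symm hy)
  rw [div_mul_eq_mul_div, eq_div_iff hy']
  linear_combination (-2 * y) * hxy

/-- For an integer `n ≥ 1` and `0 < ε < π/2`, the function
`G(ψ) = cot(ψ/2)^n - tan(ψ/2)^n` satisfies the Steklov boundary conditions
`-G'(ε) = σₙ⁺(ε) · G(ε)` and `G'(π - ε) = σₙ⁺(ε) · G(π - ε)`, where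
`σₙ⁺(ε) = n(1 + tan(ε/2)^(2n)) / (sinε · (1 - tan(ε/2)^(2n)))`. -/
theorem eigenfunction_sigma_plus (n : ℕ) (hn : 1 ≤ n) (ε : ℝ) (hε : 0 < ε)
    (hε' : ε < π / 2) :
    -deriv (fun ψ : ℝ => Real.cot (ψ / 2) ^ n - Real.tan (ψ / 2) ^ n) ε =
      (n : ℝ) * (1 + Real.tan (ε / 2) ^ (2 * n)) /
          (Real.sin ε * (1 - Real.tan (ε / 2) ^ (2 * n))) *
        (Real.cot (ε / 2) ^ n - Real.tan (ε / 2) ^ n) ∧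
    deriv (fun ψ : ℝ => Real.cot (ψ / 2) ^ n - Real.tan (ψ / 2) ^ n) (π - ε) =
      (n : ℝ) * (1 + Real.tan (ε / 2) ^ (2 * n)) /
          (Real.sin ε * (1 - Real.tan (ε / 2) ^ (2 * n))) *
        (Real.cot ((π - ε) / 2) ^ n - Real.tan ((π - ε) / 2) ^ n) := by
  have hsin : sin ε ≠ 0 := (sin_pos_of_pos_of_lt_pi hε (by linarith [pi_pos])).ne'
  have htan_pos : 0 < tan (ε / 2) := tan_pos_of_pos_of_lt_pi_div_two (by linarith) (by linarith)
  have htan_lt_one : tan (ε / 2) < 1 := by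
    simpa [tan_pi_div_four] using tan_lt_tan_of_lt_of_lt_pi_div_two (y := π / 4)
      (by linarith [pi_pos]) (by linarith [pi_pos]) (by linarith)
  have hcot_mul_tan : cot (ε / 2) ^ n * tan (ε / 2) ^ n = 1 := by
    have hcot : cot (ε / 2) ≠ 0 := fun h0 => htan_pos.ne' (by rw [← cot_inv_eq_tan, h0, inv_zero])
    rw [← mul_pow, ← cot_inv_eq_tan, mul_inv_cancel₀ hcot, one_pow]
  have htan_pow_lt_one : tan (ε / 2) ^ n < 1 := pow_lt_one₀ htan_pos.le htan_lt_one (by omega)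
  have hkey := add_eq_div_mul_sub_of_mul_eq_one hcot_mul_tan
    (pow_lt_one₀ (by positivity) htan_pow_lt_one two_ne_zero).ne
  have hcot_refl : cot ((π - ε) / 2) = tan (ε / 2) := by
    rw [cot_half_eq_tan_pi_sub_half, sub_sub_cancel]
  rw [pow_mul', (hasDerivAt_cot_half_pow_sub_tan_half_pow n hsin).deriv,
    (hasDerivAt_cot_half_pow_sub_tan_half_pow n (ψ := π - ε) (by rwa [sin_pi_sub])).deriv,
    sin_pi_sub, hcot_refl, ← cot_half_eq_tan_pi_sub_half, mul_div_mul_comm]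
  constructor
  · linear_combination (n / sin ε) * hkey
  · linear_combination (-n / sin ε) * hkey
end
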